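/- Let H be a semigroup and G an H-group satisfying H-max-n. Suppose G is residually finite as an H-group (for every g ≠ 1 there is a finite-index H-stable normal subgroup of G not containing g), and likewise every H-quotient of G is residually finite as an H-group. Then cb_H(G) = ℓ'_H(G). -/

import Mathlib

noncomputable section

/-- Chabauty topology on the set of subgroups of `G`: the topology induced from the
product topology on `{0,1}^G` via indicator functions. -/
noncomputable instance chabautyTopology {G : Type*} [Group G] : TopologicalSpace (Subgroup G) :=
  TopologicalSpace.induced (fun N g => @decide (g ∈ N) (Classical.propDecidable _))
    (inferInstance : TopologicalSpace (G → Bool))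

/-- Iterated Cantor–Bendixson derivatives of the space `X`:
`X^(0) = X`, `X^(α+1)` is the set of accumulation points of `X^(α)`, and
`X^(λ) = ⋂_{β<λ} X^(β)` for limit `λ`. -/
noncomputable def cbD (X : Type*) [TopologicalSpace X] (o : Ordinal) : Set X :=
  Ordinal.limitRecOn o Set.univ (fun _ ih => {x | AccPt x (Filter.principal ih)})
    (fun o _ ih => ⋂ β : Set.Iio o, ih β.1 β.2)

/-- The point `x` has Cantor–Bendixson rank exactly `α` in `X`: it belongs to the `α`-th
derivative but not to the `(α+1)`-st (so `α` is the largest ordinal with `x ∈ X^(α)`). -/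
def CBRankEq {X : Type*} [TopologicalSpace X] (x : X) (α : Ordinal) : Prop :=
  x ∈ cbD X α ∧ x ∉ cbD X (α + 1)

/-- The Cantor–Bendixson rank of a point: the largest `α` with `x ∈ X^(α)`
(the set of such `α` is an initial segment of the ordinals, closed under limits). -/
noncomputable def cbRank {X : Type*} [TopologicalSpace X] (x : X) : Ordinal :=
  sSup {α | x ∈ cbD X α}

/-- The trivial subgroup, as a point of the space `𝒩(G)` of normal subgroups of `G`
(with its Chabauty topology); `cb(G)` is the Cantor–Bendixson rank of this point. -/
def nsBot (G : Type*) [Group G] : {N : Subgroup G // N.Normal} := ⟨⊥, inferInstance⟩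

universe u

open Classical in
/-- The ordinal-valued "length" attached to an element of a poset `L`, defined by
well-founded recursion on `>` (available under the max-n condition, i.e. well-foundedness
of `>`; junk value `0` otherwise): `gtRank x = sup { gtRank y + 1 : y > x }`.

For `L` the lattice of (`H`-stable) normal subgroups of a group `G` (resp. of submodules
of a module `M`), `gtRank N` is the ordinal length `ℓ(G/N)` (resp. `ℓ(M/N)`) of the
quotient, since (`H`-stable) normal subgroups of `G/N` correspond to those of `G`
containing `N`; in particular `gtRank ⊥ = ℓ(G)` (resp. `ℓ(M)`). -/
noncomputable def gtRank {L : Type u} [Preorder L] (x : L) : Ordinal.{u} :=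
  if h : WellFounded ((· > ·) : L → L → Prop) then (h.apply x).rank else 0

/-- An `H`-group structure on `G` (for `H` a semigroup) is an action of `H` on `G` by group
endomorphisms, i.e. a semigroup homomorphism `H → End(G)`. A normal subgroup `N` is
`H`-stable if it is invariant under the action. -/
def HStable {H G : Type*} [Mul H] [Group G] (act : H →ₙ* Monoid.End G)
    (N : Subgroup G) : Prop :=
  ∀ (h : H) (g : G), g ∈ N → act h g ∈ N

/-- The trivial subgroup as a point of the space `𝒩_H(G)` of `H`-stable normal
subgroups of `G`. -/
def hBot {H G : Type*} [Mul H] [Group G] (act : H →ₙ* Monoid.End G) :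
    {N : Subgroup G // N.Normal ∧ HStable act N} :=
  ⟨⊥, inferInstance, fun h g hg => by
    rw [Subgroup.mem_bot] at hg ⊢
    rw [hg, map_one]⟩

/-- The trivial subgroup as an element of the lattice of `H`-stable normal subgroups of `G`
contained in `M`; this lattice is the lattice of `GH`-stable normal subgroups of the
`GH`-group `M` (where `GH = G ⋊ H` acts on the normal subgroup `M` by conjugation and by
the `H`-action), so that `gtRank` of this element is the length `ℓ_{GH}(M)`. -/
def hBotIn {H G : Type*} [Mul H] [Group G] (act : H →ₙ* Monoid.End G) (M : Subgroup G) :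
    {K : Subgroup G // (K.Normal ∧ HStable act K) ∧ K ≤ M} :=
  ⟨⊥, ⟨inferInstance, fun h g hg => by
    rw [Subgroup.mem_bot] at hg ⊢
    rw [hg, map_one]⟩, bot_le⟩

/-!
Write `ℓ(N)` for the length of `G/N`. By induction on `α`, an `H`-stable normal subgroup `N` lies
in the `α`-th derived set of `𝒩_H(G)` exactly when `ω·α ≤ ℓ(N)`; the successor step says that `N`
is a limit of subgroups `M` with `β ≤ ℓ(M)` iff `β + ω ≤ ℓ(N)`.

If `β + ω ≤ ℓ(N)`, let `C ⊇ N` be of finite index and separate a given finite set from `N`. Some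
`M` with `N < M ≤ C` has `β ≤ ℓ(M)`: otherwise the subgroups `Y` with `Y ∩ C = N` are recorded by
`YC ⊇ C`, which grows strictly along chains, giving `ℓ(N) ≤ β + [G : C] < β + ω`.

If `ℓ(N) = β + n` with `n` finite, every `M > N` with `β ≤ ℓ(M)` is at finite distance from `N`
and so contains a minimal `H`-stable normal subgroup over `N`. Residual finiteness of `G/N` makes
each of these finite modulo `N`, and by max-n they all lie in a finite join of them, so there are
finitely many. As `N` is finitely generated (max-n again), some Chabauty neighbourhood of `N`
consists of subgroups containing `N` and missing a chosen point of each minimal one; it contains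
no such `M`.
-/

section GtRank

variable {L : Type u} [Preorder L] [WellFoundedGT L]

theorem gtRank_eq_rank (x : L) : gtRank x = IsWellFounded.rank (· > ·) x := by
  rw [gtRank, dif_pos wellFounded_gt]
  rfl

theorem gtRank_strictAnti : StrictAnti (gtRank : L → Ordinal.{u}) := fun x y h => by
  simpa only [gtRank_eq_rank] using WellFoundedGT.rank_strictAnti h

theorem gtRank_le_iff {x : L} {o : Ordinal.{u}} :
    gtRank x ≤ o ↔ ∀ y, x < y → gtRank y < o := by
  refine ⟨fun h y hxy => (gtRank_strictAnti hxy).trans_le h, fun h => ?_⟩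
  rw [gtRank_eq_rank, IsWellFounded.rank_eq, Ordinal.iSup_le_iff]
  rintro ⟨y, hxy⟩
  rw [Order.succ_le_iff, ← gtRank_eq_rank]
  exact h y hxy

theorem exists_covBy_le_of_gtRank_le_add {x y : L} (hxy : x < y) (k : ℕ)
    (h : gtRank x ≤ gtRank y + k) : ∃ a, x ⋖ a ∧ a ≤ y := by
  induction k generalizing y with
  | zero => exact absurd (gtRank_strictAnti hxy) (by simpa using h)
  | succ k ih =>
    by_cases hcov : x ⋖ y
    · exact ⟨y, hcov, le_rfl⟩
    obtain ⟨z, hxz, hzy⟩ : ∃ z, x < z ∧ z < y := by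
      simpa [CovBy, hxy] using hcov
    have hyz : gtRank y + 1 ≤ gtRank z := Order.add_one_le_of_lt (gtRank_strictAnti hzy)
    obtain ⟨a, hxa, haz⟩ := ih hxz <| calc
      gtRank x ≤ gtRank y + (1 + k : ℕ) := by rwa [add_comm 1 k]
      _ = gtRank y + 1 + k := by push_cast; rw [add_assoc]
      _ ≤ gtRank z + k := by gcongr
    exact ⟨a, hxa, haz.trans hzy.le⟩

end GtRank

section Chabauty

open Filter Topology

variable {G : Type*} [Group G] {p : Subgroup G → Prop}

theorem nhds_hasBasis_agreeOn (N : {Y : Subgroup G // p Y}) :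
    (𝓝 N).HasBasis Set.Finite (fun I => {M | ∀ g ∈ I, (g ∈ M.1 ↔ g ∈ N.1)}) := by
  rw [nhds_induced, nhds_induced, nhds_pi]
  simp only [nhds_discrete]
  refine (((hasBasis_pi_pure _).comap _).comap _).congr (fun _ => Iff.rfl) fun I _ => ?_
  ext M
  simp [decide_eq_decide]

theorem accPt_principal_iff_forall_finite {N : {Y : Subgroup G // p Y}} {S : Set {Y // p Y}} :
    AccPt N (𝓟 S) ↔ ∀ I : Set G, I.Finite → ∃ M ∈ S, M ≠ N ∧ ∀ g ∈ I, (g ∈ M.1 ↔ g ∈ N.1) := by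
  rw [accPt_iff_frequently, (nhds_hasBasis_agreeOn N).frequently_iff]
  refine forall₂_congr fun I _ => ⟨fun ⟨M, hagree, hne, hS⟩ => ⟨M, hS, hne, hagree⟩,
    fun ⟨M, hS, hne, hagree⟩ => ⟨M, hagree, hne, hS⟩⟩

end Chabauty

section CantorBendixson

variable (X : Type*) [TopologicalSpace X]

theorem cbD_zero : cbD X 0 = Set.univ := by
  simp [cbD, Ordinal.limitRecOn_zero]

theorem cbD_add_one (o : Ordinal) :
    cbD X (o + 1) = {x | AccPt x (Filter.principal (cbD X o))} := by
  rw [cbD, Ordinal.limitRecOn_add_one]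
  rfl

theorem cbD_limit {o : Ordinal} (ho : Order.IsSuccLimit o) :
    cbD X o = ⋂ β : Set.Iio o, cbD X β.1 := by
  rw [cbD, Ordinal.limitRecOn_limit _ _ _ _ ho]
  rfl

end CantorBendixson

section SubgroupLattice

open scoped Pointwise

variable {G : Type*} [Group G]

theorem Subgroup.sup_lt_sup_of_lt_of_inf_le {A B C : Subgroup G} [C.Normal] (hAB : A < B)
    (hinf : B ⊓ C ≤ A) : A ⊔ C < B ⊔ C := by
  refine lt_of_le_of_ne (sup_le_sup_right hAB.le C) fun hsup => hAB.not_ge fun b hb => ?_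
  have hb' : b ∈ ((A ⊔ C : Subgroup G) : Set G) := hsup ▸ mem_sup_left hb
  rw [mul_normal A C] at hb'
  obtain ⟨a, ha, c, hc, rfl⟩ := hb'
  have hcB : c ∈ B := by simpa using B.mul_mem (B.inv_mem (hAB.le ha)) hb
  exact A.mul_mem ha (hinf ⟨hcB, hc⟩)

theorem Subgroup.finite_map_mk'_of_inf_le {N A K : Subgroup G} [N.Normal] [K.Normal]
    [K.FiniteIndex] (hAK : A ⊓ K ≤ N) : Finite (A.map (QuotientGroup.mk' N)) := by
  choose a haA ha using fun x : A.map (QuotientGroup.mk' N) => Subgroup.mem_map.1 x.2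
  refine Finite.of_injective (fun x => (a x : G ⧸ K)) fun x y hxy => Subtype.ext ?_
  rw [← ha x, ← ha y, QuotientGroup.mk'_apply, QuotientGroup.mk'_apply, QuotientGroup.eq]
  exact hAK ⟨A.mul_mem (A.inv_mem (haA x)) (haA y), QuotientGroup.eq.1 hxy⟩

theorem Subgroup.finite_map_finset_sup {Q ι : Type*} [Group Q] {π : G →* Q}
    (hπ : Function.Surjective π) (s : Finset ι) (f : ι → Subgroup G) [∀ i, (f i).Normal]
    (hf : ∀ i ∈ s, Finite ((f i).map π)) : Finite ((s.sup f).map π) := by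
  refine (Finset.sup_induction (p := fun Y : Subgroup G => Y.Normal ∧ Finite (Y.map π))
    ⟨inferInstance, by rw [map_bot]; infer_instance⟩ (fun Y hY Z hZ => ?_)
    fun i hi => ⟨inferInstance, hf i hi⟩).2
  have := hY.1; have := hZ.1; have := hY.2; have := hZ.2
  have : (Y.map π).Normal := hY.1.map π hπ
  have hYZ : ((Y.map π : Set Q) * (Z.map π : Set Q)).Finite := (Set.toFinite _).mul (Set.toFinite _)
  rw [← normal_mul] at hYZ
  exact ⟨inferInstance, by rw [map_sup]; exact hYZ.to_subtype⟩

end SubgroupLattice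

theorem exists_finset_forall_le_sup {α ι : Type*} [SemilatticeSup α] [OrderBot α]
    {p : α → Prop} [WellFoundedGT {a // p a}] (hbot : p ⊥)
    (hsup : ∀ a b, p a → p b → p (a ⊔ b)) (f : ι → α) (hf : ∀ i, p (f i)) :
    ∃ s : Finset ι, ∀ i, f i ≤ s.sup f := by
  classical
  have hp (s : Finset ι) : p (s.sup f) :=
    Finset.sup_induction hbot (fun a ha b hb => hsup a b ha hb) fun i _ => hf i
  obtain ⟨_, ⟨s, rfl⟩, hmax⟩ := wellFounded_gt.has_min
    (Set.range fun s : Finset ι => (⟨s.sup f, hp s⟩ : {a // p a})) (Set.range_nonempty _)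
  refine ⟨s, fun i => by_contra fun hi => hmax ⟨_, hp (insert i s)⟩ ⟨insert i s, rfl⟩ ?_⟩
  show s.sup f < (insert i s).sup f
  rw [Finset.sup_insert]
  exact right_lt_sup.2 hi

section HStableNormal

variable {H : Type*} [Mul H] {G : Type*} [Group G] (act : H →ₙ* Monoid.End G)

abbrev IsHStableNormal (N : Subgroup G) : Prop := N.Normal ∧ HStable act N

abbrev HStableNormal := {N : Subgroup G // IsHStableNormal act N}

variable {act}

instance HStableNormal.normal (N : HStableNormal act) : N.1.Normal := N.2.1

theorem isHStableNormal_top : IsHStableNormal act ⊤ :=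
  ⟨inferInstance, fun _ _ _ => trivial⟩

theorem isHStableNormal_bot : IsHStableNormal act ⊥ := (hBot act).2

theorem IsHStableNormal.inf {A B : Subgroup G} (hA : IsHStableNormal act A)
    (hB : IsHStableNormal act B) : IsHStableNormal act (A ⊓ B) :=
  haveI := hA.1; haveI := hB.1
  ⟨inferInstance, fun h g hg => ⟨hA.2 h g hg.1, hB.2 h g hg.2⟩⟩

theorem IsHStableNormal.sup {A B : Subgroup G} (hA : IsHStableNormal act A)
    (hB : IsHStableNormal act B) : IsHStableNormal act (A ⊔ B) :=
  haveI := hA.1; haveI := hB.1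
  ⟨inferInstance, fun h => show A ⊔ B ≤ (A ⊔ B).comap (act h : G →* G) from
    sup_le (fun g hg => Subgroup.mem_sup_left (hA.2 h g hg))
      (fun g hg => Subgroup.mem_sup_right (hB.2 h g hg))⟩

theorem isHStableNormal_sInf {S : Set (Subgroup G)} (hS : ∀ Y ∈ S, IsHStableNormal act Y) :
    IsHStableNormal act (sInf S) :=
  ⟨⟨fun n hn g => Subgroup.mem_sInf.2 fun Y hY =>
      (hS Y hY).1.conj_mem n (Subgroup.mem_sInf.1 hn Y hY) g⟩,
    fun h g hg => Subgroup.mem_sInf.2 fun Y hY => (hS Y hY).2 h g (Subgroup.mem_sInf.1 hg Y hY)⟩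

variable (act)

def hStableNormalClosure (s : Set G) : HStableNormal act :=
  ⟨sInf {Y | IsHStableNormal act Y ∧ s ⊆ Y}, isHStableNormal_sInf fun _ hY => hY.1⟩

theorem subset_hStableNormalClosure (s : Set G) : s ⊆ (hStableNormalClosure act s).1 :=
  fun _ hg => Subgroup.mem_sInf.2 fun _ hY => hY.2 hg

variable {act}

theorem hStableNormalClosure_le {s : Set G} {M : HStableNormal act} (hs : s ⊆ M.1) :
    hStableNormalClosure act s ≤ M :=
  sInf_le (a := M.1) ⟨M.2, hs⟩

theorem HStableNormal.exists_finite_generating [WellFoundedGT (HStableNormal act)]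
    (N : HStableNormal act) :
    ∃ I : Set G, I.Finite ∧ I ⊆ N.1 ∧ ∀ M : HStableNormal act, I ⊆ M.1 → N ≤ M := by
  obtain ⟨s, hs⟩ := exists_finset_forall_le_sup isHStableNormal_bot
    (fun _ _ => IsHStableNormal.sup) (fun g : N.1 => (hStableNormalClosure act {g.1}).1)
    fun _ => Subtype.prop _
  refine ⟨Subtype.val '' (s : Set N.1), s.finite_toSet.image _,
    Subtype.coe_image_subset _ _, fun M hsM g hg => ?_⟩
  refine (hs ⟨g, hg⟩).trans (Finset.sup_le fun g' hg' => ?_)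
    (subset_hStableNormalClosure act {g} rfl)
  exact hStableNormalClosure_le (Set.singleton_subset_iff.2 (hsM ⟨g', hg', rfl⟩))

end HStableNormal

section ResiduallyFinite

open Filter Ordinal

variable {H : Type*} [Mul H] {G : Type*} [Group G] (act : H →ₙ* Monoid.End G)

def HQuotientsResiduallyFinite : Prop :=
  ∀ N : Subgroup G, N.Normal → HStable act N → ∀ g ∉ N,
    ∃ K : Subgroup G, K.Normal ∧ HStable act K ∧ N ≤ K ∧ K.index ≠ 0 ∧ g ∉ K

variable {act}

theorem HQuotientsResiduallyFinite.exists_separating (hres : HQuotientsResiduallyFinite act)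
    (N : HStableNormal act) {I : Set G} (hI : I.Finite) :
    ∃ C : HStableNormal act, C.1.FiniteIndex ∧ N ≤ C ∧ ∀ g ∈ I, g ∈ C.1 → g ∈ N.1 := by
  induction I, hI using Set.Finite.induction_on with
  | empty => exact ⟨⟨⊤, isHStableNormal_top⟩, inferInstance, show N.1 ≤ ⊤ from le_top, by simp⟩
  | @insert g I _ _ ih =>
    obtain ⟨C, hCfin, hNC, hC⟩ := ih
    by_cases hg : g ∈ N.1
    · exact ⟨C, hCfin, hNC, by simp_all⟩
    obtain ⟨K, hKn, hKs, hNK, hKidx, hgK⟩ := hres N.1 N.2.1 N.2.2 g hg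
    have : K.FiniteIndex := ⟨hKidx⟩
    refine ⟨⟨C.1 ⊓ K, C.2.inf ⟨hKn, hKs⟩⟩, inferInstance, le_inf hNC hNK, ?_⟩
    rintro x (rfl | hx) hxCK
    · exact absurd hxCK.2 hgK
    · exact hC x hx hxCK.1

theorem HQuotientsResiduallyFinite.finite_map_mk'_of_covBy
    (hres : HQuotientsResiduallyFinite act) {N A : HStableNormal act} (h : N ⋖ A) :
    Finite (A.1.map (QuotientGroup.mk' N.1)) := by
  obtain ⟨g, hgA, hgN⟩ := SetLike.exists_of_lt (show N.1 < A.1 from h.lt)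
  obtain ⟨K, hKn, hKs, hNK, hKidx, hgK⟩ := hres N.1 N.2.1 N.2.2 g hgN
  have : K.FiniteIndex := ⟨hKidx⟩
  refine Subgroup.finite_map_mk'_of_inf_le (K := K) (le_of_eq ?_)
  have := h.eq_or_eq (c := ⟨A.1 ⊓ K, A.2.inf ⟨hKn, hKs⟩⟩) (le_inf h.le hNK)
    (show A.1 ⊓ K ≤ A.1 from inf_le_left)
  rcases this with hN | hA
  · exact Subtype.ext_iff.1 hN
  · exact absurd ((Subtype.ext_iff.1 hA).ge hgA).2 hgK

theorem HQuotientsResiduallyFinite.finite_setOf_covBy [WellFoundedGT (HStableNormal act)]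
    (hres : HQuotientsResiduallyFinite act) (N : HStableNormal act) :
    {A : HStableNormal act | N ⋖ A}.Finite := by
  set π := QuotientGroup.mk' N.1
  obtain ⟨s, hs⟩ := exists_finset_forall_le_sup isHStableNormal_bot
    (fun _ _ => IsHStableNormal.sup) (fun A : {A : HStableNormal act // N ⋖ A} => A.1.1)
    fun A => A.1.2
  have hJ : Finite ((s.sup fun A => A.1.1).map π) :=
    Subgroup.finite_map_finset_sup (QuotientGroup.mk'_surjective _) s _
      fun A _ => hres.finite_map_mk'_of_covBy A.2
  have hinj : Set.InjOn (fun A : HStableNormal act => (A.1.map π : Set (G ⧸ N.1)))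
      {A | N ⋖ A} := by
    intro A₁ h₁ A₂ h₂ he
    have hker : π.ker = N.1 := QuotientGroup.ker_mk' _
    have := congrArg (Subgroup.comap π) (SetLike.coe_injective he)
    rwa [Subgroup.comap_map_eq_self (hker.trans_le h₁.le),
      Subgroup.comap_map_eq_self (hker.trans_le h₂.le), Subtype.val_inj] at this
  refine Set.Finite.of_finite_image
    ((Set.toFinite ((s.sup fun A => A.1.1).map π : Set (G ⧸ N.1))).finite_subsets.subset ?_) hinj
  rintro _ ⟨A, hA, rfl⟩
  exact Subgroup.map_mono (hs ⟨A, hA⟩)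

end ResiduallyFinite

section Rank

open Filter Ordinal

variable {H : Type*} [Mul H] {G : Type*} [Group G] {act : H →ₙ* Monoid.End G}
  [WellFoundedGT (HStableNormal act)]

theorem gtRank_le_add_index {N C : HStableNormal act} [C.1.FiniteIndex] {β : Ordinal}
    (hsmall : ∀ M : HStableNormal act, N < M → M ≤ C → gtRank M < β) (Y : HStableNormal act)
    (hYC : Y.1 ⊓ C.1 = N.1) : gtRank Y ≤ β + (Y.1 ⊔ C.1).index := by
  induction Y using WellFoundedGT.induction with
  | _ Y ih =>
  refine gtRank_le_iff.2 fun Z hYZ => ?_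
  by_cases hZC : Z.1 ⊓ C.1 = N.1
  · have hsup : Y.1 ⊔ C.1 < Z.1 ⊔ C.1 :=
      Subgroup.sup_lt_sup_of_lt_of_inf_le hYZ ((hZC.trans hYC.symm).le.trans inf_le_left)
    have : (Y.1 ⊔ C.1).FiniteIndex := Subgroup.finiteIndex_of_le le_sup_right
    calc gtRank Z ≤ β + (Z.1 ⊔ C.1).index := ih Z hYZ hZC
      _ < β + (Y.1 ⊔ C.1).index :=
        add_lt_add_right (Nat.cast_lt.2 (Subgroup.index_strictAnti hsup)) β
  · let M : HStableNormal act := ⟨Z.1 ⊓ C.1, Z.2.inf C.2⟩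
    have hNM : N < M :=
      lt_of_le_of_ne (show N.1 ≤ Z.1 ⊓ C.1 from hYC ▸ inf_le_inf_right C.1 hYZ.le)
        fun h => hZC (Subtype.ext_iff.1 h).symm
    calc gtRank Z ≤ gtRank M := gtRank_strictAnti.antitone (show M.1 ≤ Z.1 from inf_le_left)
      _ < β := hsmall M hNM (show M.1 ≤ C.1 from inf_le_right)
      _ ≤ β + _ := le_self_add

theorem exists_lt_le_of_add_omega0_le_gtRank {N C : HStableNormal act} [C.1.FiniteIndex]
    (hNC : N ≤ C) {β : Ordinal} (h : β + ω ≤ gtRank N) : ∃ M, N < M ∧ M ≤ C ∧ β ≤ gtRank M := by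
  by_contra! hsmall
  have hN := gtRank_le_add_index hsmall N (inf_eq_left.2 hNC)
  rw [sup_eq_right.2 hNC] at hN
  exact (hN.trans_lt (add_lt_add_right (natCast_lt_omega0 _) β)).not_ge h

theorem HQuotientsResiduallyFinite.accPt_of_add_omega0_le_gtRank
    (hres : HQuotientsResiduallyFinite act) {N : HStableNormal act} {β : Ordinal}
    (h : β + ω ≤ gtRank N) : AccPt N (𝓟 {M | β ≤ gtRank M}) := by
  refine accPt_principal_iff_forall_finite.2 fun I hI => ?_
  obtain ⟨C, _, hNC, hC⟩ := hres.exists_separating N hI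
  obtain ⟨M, hNM, hMC, hM⟩ := exists_lt_le_of_add_omega0_le_gtRank hNC h
  exact ⟨M, hM, hNM.ne', fun g hg => ⟨fun hgM => hC g hg (hMC hgM), fun hgN => hNM.le hgN⟩⟩

theorem HQuotientsResiduallyFinite.add_omega0_le_gtRank_of_accPt
    (hres : HQuotientsResiduallyFinite act) {N : HStableNormal act} {β : Ordinal}
    (h : AccPt N (𝓟 {M | β ≤ gtRank M})) : β + ω ≤ gtRank N := by
  by_contra! hlt
  obtain ⟨_, hd, hNd⟩ := (lt_add_iff omega0_ne_zero).1 hlt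
  obtain ⟨n, rfl⟩ := lt_omega0.1 hd
  choose! w hwA hwN using fun (A : HStableNormal act) (hA : N ⋖ A) =>
    SetLike.exists_of_lt (show N.1 < A.1 from hA.lt)
  obtain ⟨I, hI, hIN, hgen⟩ := N.exists_finite_generating
  obtain ⟨M, hM, hMN, hagree⟩ := accPt_principal_iff_forall_finite.1 h
    (I ∪ w '' {A | N ⋖ A}) (hI.union ((hres.finite_setOf_covBy N).image w))
  have hNM : N < M :=
    lt_of_le_of_ne (hgen M fun g hg => (hagree g (Or.inl hg)).2 (hIN hg)) hMN.symm
  obtain ⟨A, hNA, hAM⟩ :=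
    exists_covBy_le_of_gtRank_le_add hNM n (hNd.trans (add_le_add_left hM _))
  exact hwN A hNA ((hagree _ (Or.inr ⟨A, hNA, rfl⟩)).1 (hAM (hwA A hNA)))

theorem HQuotientsResiduallyFinite.mem_cbD_iff (hres : HQuotientsResiduallyFinite act)
    (α : Ordinal) (N : HStableNormal act) :
    N ∈ cbD (HStableNormal act) α ↔ ω * α ≤ gtRank N := by
  induction α using WellFoundedLT.induction generalizing N with
  | _ α ih =>
  rcases zero_or_succ_or_isSuccLimit α with rfl | ⟨β, rfl⟩ | hlim
  · simp [cbD_zero]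
  · have hβ : cbD (HStableNormal act) β = {M | ω * β ≤ gtRank M} :=
      Set.ext fun M => ih β (Order.lt_succ β) M
    rw [Order.succ_eq_add_one, cbD_add_one, hβ, mul_add_one]
    exact ⟨hres.add_omega0_le_gtRank_of_accPt, hres.accPt_of_add_omega0_le_gtRank⟩
  · rw [cbD_limit _ hlim, Set.mem_iInter, mul_le_iff_of_isSuccLimit hlim]
    exact ⟨fun h β hβ => (ih β hβ N).1 (h ⟨β, hβ⟩), fun h β => (ih β.1 β.2 N).2 (h β.1 β.2)⟩

end Rank

/-- Let `H` be a semigroup and `G` an `H`-group satisfying `H`-max-n.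
Suppose every `H`-quotient of `G` (including `G` itself) is residually finite as an
`H`-group: for every `H`-stable normal `N` and `g ∉ N` there is an `H`-stable normal
`K ⊇ N` of finite index with `g ∉ K`. Then `cb_H(G) = ℓ'_H(G)`: the trivial subgroup, as a
point of the space `𝒩_H(G)` of `H`-stable normal subgroups with its Chabauty topology, has
Cantor–Bendixson rank exactly the reduced length `ℓ'_H(G)`. -/
theorem cb_eq_reduced_length_of_residually_finite {H : Type*} [Semigroup H]
    {G : Type u} [Group G] (act : H →ₙ* Monoid.End G)
    (hmax : WellFounded ((· > ·) :
      {N : Subgroup G // N.Normal ∧ HStable act N} →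
        {N : Subgroup G // N.Normal ∧ HStable act N} → Prop))
    (hres : ∀ N : Subgroup G, N.Normal → HStable act N → ∀ g ∉ N,
      ∃ K : Subgroup G, K.Normal ∧ HStable act K ∧ N ≤ K ∧ K.index ≠ 0 ∧ g ∉ K) :
    CBRankEq (hBot act) (gtRank (hBot act) / Ordinal.omega0) := by
  have : WellFoundedGT (HStableNormal act) := ⟨hmax⟩
  have hmem (α : Ordinal) :=
    HQuotientsResiduallyFinite.mem_cbD_iff (act := act) hres α (hBot act)
  refine ⟨(hmem _).2 (Ordinal.mul_div_le _ _), fun h => ((hmem _).1 h).not_gt ?_⟩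
  rw [mul_add_one]
  exact Ordinal.lt_mul_div_add _ Ordinal.omega0_ne_zero
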